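/- For every i ∈ ℤ, |√N − Q_i| < P_{i-1}, i.e. −P_{i-1} < √N − Q_i < P_{i-1} as real numbers; in particular every Q_i is a positive integer. (Theorem 2 (Riesel), part (e): every complete quotient x_i = (√N + P_{i-1})/Q_i is reduced.) -/

import Mathlib

/-- fdiv bounds for positive divisor. -/
lemma fdiv_bounds (a q : ℤ) (hq : 0 < q) :
    (a.fdiv q) * q ≤ a ∧ a < (a.fdiv q + 1) * q := by
  rw [Int.fdiv_eq_ediv_of_nonneg a hq.le]
  have h1 := Int.mul_ediv_add_emod a q
  have h2 := Int.emod_lt_of_pos a hq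
  have h3 := Int.emod_nonneg a hq.ne'
  constructor <;> nlinarith

/-- The `b`-step: from a reduced triple `(p, q)` we get a reduced triple `(p', q)`. -/
lemma bstep_aux (s : ℝ) (r p q bb p' : ℤ)
    (hrs : (r : ℝ) < s) (hsr : s < r + 1) (hq : 0 < q)
    (h1 : (p : ℝ) < s) (h2 : s - p < q) (h3 : (q : ℝ) < s + p)
    (hb : bb = Int.fdiv (r + p) q) (hp' : p' = bb * q - p) :
    1 ≤ bb ∧ ((p' : ℝ) < s ∧ s - p' < q ∧ (q : ℝ) < s + p') := by
  obtain ⟨hl, hu⟩ := fdiv_bounds (r + p) q hq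
  rw [← hb] at hl hu
  -- q ≤ r + p  (since (q:ℝ) < s + p < r + 1 + p)
  have hqrp : q ≤ r + p := by
    have : (q : ℝ) < (r : ℝ) + 1 + p := by linarith
    have : q < r + 1 + p := by exact_mod_cast this
    omega
  have hb1 : 1 ≤ bb := by nlinarith
  have hlR : (bb : ℝ) * q ≤ (r : ℝ) + p := by exact_mod_cast hl
  have huR : (r : ℝ) + p < ((bb : ℝ) + 1) * q := by exact_mod_cast hu
  have hp'R : (p' : ℝ) = bb * q - p := by rw [hp']; push_cast; ring
  refine ⟨hb1, ?_, ?_, ?_⟩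
  · rw [hp'R]; linarith
  · have huZ : ((r : ℝ) + p + 1) ≤ ((bb : ℝ) + 1) * q := by
      have : r + p + 1 ≤ (bb + 1) * q := by omega
      exact_mod_cast this
    rw [hp'R]; linarith
  · have hbR : (1 : ℝ) ≤ (bb : ℝ) := by exact_mod_cast hb1
    have hqR : (0 : ℝ) < q := by exact_mod_cast hq
    rw [hp'R]; nlinarith

/-- The `Q`-step: from a reduced triple `(p, q)` and `q' * q = N - p²`,
we get a reduced triple `(p, q')`. -/
lemma qstep_aux (s : ℝ) (N p q q' : ℤ) (hs2 : s ^ 2 = N) (hq : 0 < q)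
    (h1 : (p : ℝ) < s) (h2 : s - p < q) (h3 : (q : ℝ) < s + p)
    (hqq : q' * q = N - p ^ 2) :
    0 < q' ∧ ((p : ℝ) < s ∧ s - p < q' ∧ (q' : ℝ) < s + p) := by
  have hqqR : (q' : ℝ) * q = s ^ 2 - (p : ℝ) ^ 2 := by
    rw [hs2]; exact_mod_cast hqq
  have hqR : (0 : ℝ) < q := by exact_mod_cast hq
  have hsp : (0 : ℝ) < s - p := by linarith
  have hsp2 : (0 : ℝ) < s + p := by linarith
  have hq'R : (0 : ℝ) < q' := by nlinarith
  have hq' : 0 < q' := by exact_mod_cast hq'R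
  refine ⟨hq', h1, ?_, ?_⟩
  · nlinarith
  · nlinarith

/-- Two-sided continued fraction data of the normalized square root of `N`:
`N ≡ 1 (mod 4)` is positive and not a perfect square, `r = ⌊√N⌋`,
`P (-1) = r - 1` if `r` is even and `r` otherwise, `Q 0 = 2`, and the forward
(`i ≥ 0`) and backward (`i ≤ -1`) recursions (with `Int.fdiv` the floor
division on `ℤ`, so that `Int.fdiv x y = ⌊x / y⌋`). -/
theorem stmt_3 (N : ℤ) (hNpos : 0 < N) (hN4 : N % 4 = 1) (hNsq : ¬ IsSquare N)
    (r : ℤ) (hr : r = ⌊Real.sqrt (N : ℝ)⌋)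
    (P Q b : ℤ → ℤ)
    (hP1 : P (-1) = if 2 ∣ r then r - 1 else r)
    (hQ0 : Q 0 = 2)
    (hbf : ∀ i : ℤ, 0 ≤ i → b i = Int.fdiv (r + P (i - 1)) (Q i))
    (hPf : ∀ i : ℤ, 0 ≤ i → P i = b i * Q i - P (i - 1))
    (hQf : ∀ i : ℤ, 0 ≤ i → Q (i + 1) = Int.fdiv (N - P i ^ 2) (Q i))
    (hQb : ∀ i : ℤ, i ≤ -1 → Q i = Int.fdiv (N - P i ^ 2) (Q (i + 1)))
    (hbb : ∀ i : ℤ, i ≤ -1 → b i = Int.fdiv (r + P i) (Q i))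
    (hPb : ∀ i : ℤ, i ≤ -1 → P (i - 1) = b i * Q i - P i) :
    ∀ i : ℤ, |Real.sqrt (N : ℝ) - (Q i : ℝ)| < (P (i - 1) : ℝ) ∧ 0 < Q i := by
  set s : ℝ := Real.sqrt (N : ℝ) with hs
  have hNR : (0 : ℝ) ≤ (N : ℝ) := by exact_mod_cast hNpos.le
  have hs2 : s ^ 2 = (N : ℝ) := Real.sq_sqrt hNR
  have hs0 : 0 ≤ s := Real.sqrt_nonneg _
  -- irrationality: no integer equals s
  have hirr : ∀ m : ℤ, (m : ℝ) ≠ s := by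
    intro m hm
    apply hNsq
    have : ((m ^ 2 : ℤ) : ℝ) = (N : ℝ) := by push_cast; rw [hm]; exact hs2
    have hm2 : m ^ 2 = N := by exact_mod_cast this
    exact ⟨m, by rw [← hm2]; ring⟩
  have hN1 : N ≠ 1 := fun h => hNsq (h ▸ IsSquare.one)
  have hN5 : 5 ≤ N := by omega
  have hN5R : (5 : ℝ) ≤ (N : ℝ) := by exact_mod_cast hN5
  have hs2' : (2 : ℝ) < s := by nlinarith
  have hrle : (r : ℝ) ≤ s := by rw [hr]; exact Int.floor_le s
  have hrs : (r : ℝ) < s := lt_of_le_of_ne hrle (hirr r)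
  have hsr : s < (r : ℝ) + 1 := by
    have := Int.lt_floor_add_one s; rw [← hr] at this; exact_mod_cast this
  have hr2 : 2 ≤ r := by
    have : (2 : ℝ) ≤ r + 1 := by linarith
    have : (2 : ℤ) ≤ r + 1 := by exact_mod_cast this
    -- r ≥ 2 needs more: s > 2 gives r ≥ 2 since s < r+1 ⇒ r > s - 1 > 1
    have h : (1 : ℝ) < r := by linarith
    have : (1 : ℤ) < r := by exact_mod_cast h
    omega
  -- The invariant
  set Inv : ℤ → Prop := fun i =>
    0 < Q i ∧ ((P (i - 1) : ℝ) < s ∧ s - P (i - 1) < Q i ∧ (Q i : ℝ) < s + P (i - 1))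
      ∧ Q i ∣ (N - P (i - 1) ^ 2) with hInv
  -- Base case
  have base : Inv 0 := by
    simp only [hInv, show (0:ℤ) - 1 = -1 from by norm_num]
    have hPodd : P (-1) % 2 = 1 := by
      rw [hP1]; split <;> omega
    have hPr : r - 1 ≤ P (-1) ∧ P (-1) ≤ r := by rw [hP1]; split <;> omega
    have hPrR : ((r : ℝ) - 1 ≤ (P (-1) : ℝ)) ∧ ((P (-1) : ℝ) ≤ (r : ℝ)) := by
      constructor
      · exact_mod_cast hPr.1
      · exact_mod_cast hPr.2
    have hQ0v : Q 0 = 2 := hQ0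
    have hrR : (2 : ℝ) ≤ (r : ℝ) := by exact_mod_cast hr2
    refine ⟨by omega, ⟨?_, ?_, ?_⟩, ?_⟩
    · linarith
    · rw [hQ0v]; push_cast; linarith
    · rw [hQ0v]; push_cast; linarith
    · rw [hQ0v]
      rcases Int.odd_iff.mpr hPodd with ⟨m, hm⟩
      refine ⟨(N - 1) / 2 - 2 * (m ^ 2 + m), ?_⟩
      have : N - P (-1) ^ 2 = (N - 1) - 4 * (m ^ 2 + m) := by rw [hm]; ring
      omega
  -- Forward step
  have fwd : ∀ i : ℤ, 0 ≤ i → Inv i → Inv (i + 1) := by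
    intro i hi ⟨hq, ⟨h1, h2, h3⟩, hdvd⟩
    obtain ⟨hb1, h1', h2', h3'⟩ := bstep_aux s r (P (i - 1)) (Q i) (b i) (P i)
      hrs hsr hq h1 h2 h3 (hbf i hi) (hPf i hi)
    -- divisibility transfer to P i
    have hdvd' : Q i ∣ (N - P i ^ 2) := by
      have key : N - P i ^ 2 = (N - P (i - 1) ^ 2) - Q i * (b i * (b i * Q i - 2 * P (i - 1))) := by
        rw [hPf i hi]; ring
      rw [key]
      exact dvd_sub hdvd (Dvd.intro _ rfl)
    obtain ⟨k, hk⟩ := hdvd'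
    have hQ1 : Q (i + 1) = k := by
      rw [hQf i hi, hk, Int.mul_fdiv_cancel_left _ hq.ne']
    have hqq : Q (i + 1) * Q i = N - P i ^ 2 := by rw [hQ1, hk]; ring
    obtain ⟨hq', h1'', h2'', h3''⟩ := qstep_aux s N (P i) (Q i) (Q (i + 1))
      hs2 hq h1' h2' h3' hqq
    have hidx : i + 1 - 1 = i := by ring
    refine ⟨hq', ?_, ?_⟩
    · rw [hidx]; exact ⟨h1'', h2'', h3''⟩
    · rw [hidx]; exact ⟨Q i, hqq.symm⟩
  -- Backward step
  have bwd : ∀ i : ℤ, i ≤ -1 → Inv (i + 1) → Inv i := by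
    intro i hi ⟨hq', ⟨h1, h2, h3⟩, hdvd⟩
    have hidx : i + 1 - 1 = i := by ring
    rw [hidx] at h1 h2 h3 hdvd
    obtain ⟨k, hk⟩ := hdvd
    have hQi : Q i = k := by
      rw [hQb i hi, hk, Int.mul_fdiv_cancel_left _ hq'.ne']
    have hqq : Q i * Q (i + 1) = N - P i ^ 2 := by rw [hQi, hk]; ring
    obtain ⟨hq, h1', h2', h3'⟩ := qstep_aux s N (P i) (Q (i + 1)) (Q i)
      hs2 hq' h1 h2 h3 hqq
    obtain ⟨hb1, h1'', h2'', h3''⟩ := bstep_aux s r (P i) (Q i) (b i) (P (i - 1))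
      hrs hsr hq h1' h2' h3' (hbb i hi) (hPb i hi)
    have hdvdi : Q i ∣ (N - P i ^ 2) := ⟨Q (i + 1), hqq.symm⟩
    have hdvd'' : Q i ∣ (N - P (i - 1) ^ 2) := by
      have key : N - P (i - 1) ^ 2 = (N - P i ^ 2) - Q i * (b i * (b i * Q i - 2 * P i)) := by
        rw [hPb i hi]; ring
      rw [key]
      exact dvd_sub hdvdi (Dvd.intro _ rfl)
    exact ⟨hq, ⟨h1'', h2'', h3''⟩, hdvd''⟩
  -- All integers satisfy Inv
  have hall : ∀ i : ℤ, Inv i := by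
    intro i
    induction i using Int.induction_on with
    | zero => exact base
    | succ n ih => exact fwd n (by exact_mod_cast Int.ofNat_nonneg n) ih
    | pred n ih =>
        exact bwd (-(n : ℤ) - 1) (by omega)
          (by rw [show (-(n : ℤ) - 1 + 1) = -(n : ℤ) from by ring]; exact ih)
  intro i
  obtain ⟨hq, ⟨h1, h2, h3⟩, _⟩ := hall i
  refine ⟨?_, hq⟩
  rw [abs_lt]
  constructor <;> linarith
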